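/- arXiv:2002.01826 — 2 statements merged into one kernel-verified Lean document; each statement's English description precedes it below -/
import Mathlib

section
/- Let p > 2, K ≥ 2, let σ₁, …, σ_K ∈ {−1, 1} and let z₁ < z₂ < … < z_K be real numbers. Set Q_k(x) = σ_k·Q(x − z_k), R = Σ_{k=1}^K Q_k and G = f(R) − Σ_{k=1}^K f(Q_k), where f(u) = |u|^(p−1)·u. There exist constants C > 0 and r₀ > 0, depending only on p and K, such that if z_{k+1} − z_k ≥ r₀ for all k = 1, …, K−1, then the L² norm of G satisfies ‖G‖_{L²(ℝ)} ≤ C·Σ_{k=1}^{K−1} e^(−(z_{k+1}−z_k)). -/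
/-!
Expand `f` around the term of largest modulus: if `|a m|` is maximal among the `a k`, then
`|f(∑ a) - ∑ f(a)| ≲ |a m|^(p-1) ∑_{k ≠ m} |a k|`, by the mean value theorem for `f` and
`|f(a k)| ≤ |a m|^(p-1) |a k|`. With `Q(y) ≲ e^{-|y|}`, each cross term
`Q(x-z_i)^(p-1) Q(x-z_j)` is at most `e^{-|z_i-z_j|} e^{-(p-2)|x-z_i|}`, by the triangle
inequality in the exponent. Since `p > 2` the factor `e^{-(p-2)|x-z_i|}` is square integrable,
and `e^{-|z_i-z_j|}` is bounded by the gap term `e^{-(z_{i+1}-z_i)}`.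
-/

open MeasureTheory

/-- The ground state of the one-dimensional nonlinear Klein-Gordon equation. -/
noncomputable def Q (p : ℝ) (x : ℝ) : ℝ :=
  ((p + 1) / (2 * Real.cosh ((p - 1) / 2 * x) ^ 2)) ^ (1 / (p - 1))

/-- The focusing nonlinearity `f(u) = |u|^{p-1} u`. -/
noncomputable def f (p u : ℝ) : ℝ := |u| ^ (p - 1) * u

open Real Finset

section

variable {p : ℝ}

lemma f_zero : f p 0 = 0 := by simp [f]

lemma abs_f (u : ℝ) : |f p u| = |u| ^ (p - 1) * |u| := by
  rw [f, abs_mul, abs_of_nonneg (rpow_nonneg (abs_nonneg u) _)]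

lemma hasDerivAt_f (hp : 1 < p) (u : ℝ) : HasDerivAt (f p) (p * |u| ^ (p - 1)) u := by
  rcases eq_or_ne u 0 with rfl | hu
  · rw [hasDerivAt_iff_isLittleO, abs_zero, zero_rpow (by linarith), mul_zero]
    have h : Filter.Tendsto (fun x : ℝ => |x| ^ (p - 1)) (nhds 0) (nhds 0) := by
      simpa [zero_rpow (by linarith : p - 1 ≠ 0)] using
        ((continuous_abs.rpow_const (p := p - 1) fun _ => Or.inr (by linarith)).tendsto 0)
    simpa [f_zero, f] using ((Asymptotics.isLittleO_one_iff ℝ).2 h).mul_isBigO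
      (Asymptotics.isBigO_refl (fun x : ℝ => x) _)
  · have hs : (SignType.sign u : ℝ) * u = |u| := by
      rcases hu.lt_or_gt with h | h <;> simp [h, abs_of_neg, abs_of_pos]
    have hu' : |u| ≠ 0 := abs_ne_zero.2 hu
    refine (((hasDerivAt_abs hu).rpow_const (p := p - 1) (Or.inl hu')).mul
      (hasDerivAt_id' u)).congr_deriv ?_
    rw [rpow_sub_one hu']
    field_simp
    linear_combination (p - 1) * hs

lemma abs_f_sub_f_le (hp : 1 < p) (u v : ℝ) :
    |f p u - f p v| ≤ p * max |u| |v| ^ (p - 1) * |u - v| := by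
  have hderiv : ∀ t ∈ Metric.closedBall (0 : ℝ) (max |u| |v|),
      ‖p * |t| ^ (p - 1)‖ ≤ p * max |u| |v| ^ (p - 1) := by
    intro t ht
    rw [mem_closedBall_zero_iff, Real.norm_eq_abs] at ht
    rw [Real.norm_eq_abs, abs_of_nonneg (by positivity)]
    gcongr
  simpa [Real.norm_eq_abs, abs_sub_comm] using
    (convex_closedBall (0 : ℝ) _).norm_image_sub_le_of_norm_hasDerivWithin_le
      (fun t _ => (hasDerivAt_f hp t).hasDerivWithinAt) hderiv (by simp) (by simp)

lemma abs_f_sum_sub_sum_f_le {ι : Type*} [DecidableEq ι] (hp : 1 < p) (s : Finset ι)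
    (a : ι → ℝ) :
    |f p (∑ k ∈ s, a k) - ∑ k ∈ s, f p (a k)| ≤
      (p * (#s : ℝ) ^ (p - 1) + 1) *
        ∑ i ∈ s, ∑ j ∈ s.erase i, |a i| ^ (p - 1) * |a j| := by
  rcases s.eq_empty_or_nonempty with rfl | hs
  · simp [f_zero]
  obtain ⟨m, hm, hmax⟩ := s.exists_max_image (fun k => |a k|) hs
  set n : ℝ := (#s : ℝ)
  set T := ∑ j ∈ s.erase m, |a j|
  have hn : 1 ≤ n := Nat.one_le_cast.2 hs.card_pos
  have hsplit : ∑ k ∈ s, a k = a m + ∑ k ∈ s.erase m, a k := (add_sum_erase s a hm).symm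
  have hsum : |∑ k ∈ s, a k| ≤ n * |a m| :=
    (abs_sum_le_sum_abs _ _).trans (by simpa using sum_le_card_nsmul s _ _ hmax)
  have hdom : |f p (∑ k ∈ s, a k) - f p (a m)| ≤ p * n ^ (p - 1) * |a m| ^ (p - 1) * T :=
    calc _ ≤ p * max |∑ k ∈ s, a k| |a m| ^ (p - 1) * |∑ k ∈ s, a k - a m| :=
          abs_f_sub_f_le hp _ _
      _ ≤ p * (n * |a m|) ^ (p - 1) * T := by
          gcongr p * ?_ ^ _ * ?_
          · exact max_le hsum (le_mul_of_one_le_left (abs_nonneg _) hn)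
          · rw [hsplit, add_sub_cancel_left]
            exact abs_sum_le_sum_abs _ _
      _ = p * n ^ (p - 1) * |a m| ^ (p - 1) * T := by
          rw [mul_rpow (by linarith) (abs_nonneg _)]; ring
  have hrest : |∑ k ∈ s.erase m, f p (a k)| ≤ |a m| ^ (p - 1) * T := by
    refine (abs_sum_le_sum_abs _ _).trans ?_
    rw [mul_sum]
    gcongr with k hk
    rw [abs_f]
    gcongr ?_ ^ _ * _
    exact hmax k (mem_of_mem_erase hk)
  calc _ = |(f p (∑ k ∈ s, a k) - f p (a m)) - ∑ k ∈ s.erase m, f p (a k)| := by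
        rw [← add_sum_erase s (fun k => f p (a k)) hm]; ring_nf
    _ ≤ |f p (∑ k ∈ s, a k) - f p (a m)| + |∑ k ∈ s.erase m, f p (a k)| := abs_sub _ _
    _ ≤ (p * n ^ (p - 1) + 1) * ∑ j ∈ s.erase m, |a m| ^ (p - 1) * |a j| := by
        rw [← mul_sum]; linarith
    _ ≤ _ := by
        gcongr
        exact single_le_sum (f := fun i => ∑ j ∈ s.erase i, |a i| ^ (p - 1) * |a j|)
            (fun i _ => by positivity) hm

lemma exp_abs_le_two_mul_cosh (t : ℝ) : exp |t| ≤ 2 * cosh t := by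
  rw [← cosh_abs, cosh_eq]
  linarith [exp_pos (-|t|)]

lemma Q_nonneg (hp : 1 < p) (x : ℝ) : 0 ≤ Q p x :=
  rpow_nonneg (div_nonneg (by linarith) (by positivity)) _

lemma Q_rpow_le (hp : 1 < p) (x : ℝ) :
    Q p x ^ (p - 1) ≤ 2 * (p + 1) * exp (-((p - 1) * |x|)) := by
  set t := (p - 1) / 2 * x
  have ht : (p - 1) * |x| = 2 * |t| := by
    rw [abs_mul, abs_of_pos (by linarith : 0 < (p - 1) / 2)]; ring
  have hcosh : exp (2 * |t|) ≤ 4 * cosh t ^ 2 := by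
    rw [mul_comm, exp_mul, rpow_two]
    nlinarith [exp_abs_le_two_mul_cosh t, exp_pos |t|]
  rw [Q, one_div, rpow_inv_rpow (div_nonneg (by linarith) (by positivity)) (by linarith), ht,
    exp_neg, div_le_iff₀ (by positivity)]
  calc p + 1 = 2 * (p + 1) * (exp (2 * |t|))⁻¹ * (exp (2 * |t|) / 2) := by
        field_simp
    _ ≤ 2 * (p + 1) * (exp (2 * |t|))⁻¹ * (2 * cosh t ^ 2) := by
        gcongr
        linarith

lemma Q_le (hp : 1 < p) (x : ℝ) : Q p x ≤ (2 * (p + 1)) ^ (1 / (p - 1)) * exp (-|x|) := by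
  have hp1 : 0 < p - 1 := by linarith
  calc Q p x = (Q p x ^ (p - 1)) ^ (1 / (p - 1)) := by
        rw [one_div, rpow_rpow_inv (Q_nonneg hp x) hp1.ne']
    _ ≤ (2 * (p + 1) * exp (-((p - 1) * |x|))) ^ (1 / (p - 1)) := by
        gcongr
        · exact rpow_nonneg (Q_nonneg hp x) _
        · exact Q_rpow_le hp x
    _ = (2 * (p + 1)) ^ (1 / (p - 1)) * exp (-|x|) := by
        rw [mul_rpow (by linarith) (exp_pos _).le, ← exp_mul]
        field_simp

lemma Q_rpow_mul_Q_le (hp : 1 < p) (x u v : ℝ) :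
    Q p (x - u) ^ (p - 1) * Q p (x - v) ≤
      2 * (p + 1) * (2 * (p + 1)) ^ (1 / (p - 1)) * exp (-|u - v|) *
        exp (-((p - 2) * |x - u|)) := by
  have htri : |u - v| ≤ |x - u| + |x - v| := by
    rw [abs_sub_comm x u]; exact abs_sub_le u x v
  calc Q p (x - u) ^ (p - 1) * Q p (x - v)
      ≤ (2 * (p + 1) * exp (-((p - 1) * |x - u|))) *
          ((2 * (p + 1)) ^ (1 / (p - 1)) * exp (-|x - v|)) :=
        mul_le_mul (Q_rpow_le hp _) (Q_le hp _) (Q_nonneg hp _) (by positivity)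
    _ = 2 * (p + 1) * (2 * (p + 1)) ^ (1 / (p - 1)) *
          exp (-((p - 1) * |x - u|) + -|x - v|) := by
        rw [exp_add]; ring
    _ ≤ 2 * (p + 1) * (2 * (p + 1)) ^ (1 / (p - 1)) *
          exp (-|u - v| + -((p - 2) * |x - u|)) := by
        refine mul_le_mul_of_nonneg_left (exp_le_exp.2 ?_) (by positivity)
        linarith
    _ = _ := by rw [exp_add]; ring

lemma abs_f_sum_Q_sub_sum_f_le {ι : Type*} [DecidableEq ι] (hp : 1 < p) (s : Finset ι)
    {σ z : ι → ℝ} (hσ : ∀ k ∈ s, |σ k| ≤ 1) {E : ℝ} (hE₀ : 0 ≤ E)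
    (hE : ∀ i ∈ s, ∀ j ∈ s, i ≠ j → exp (-|z i - z j|) ≤ E) (x : ℝ) :
    |f p (∑ k ∈ s, σ k * Q p (x - z k)) - ∑ k ∈ s, f p (σ k * Q p (x - z k))| ≤
      (p * (#s : ℝ) ^ (p - 1) + 1) * (2 * (p + 1) * (2 * (p + 1)) ^ (1 / (p - 1))) * #s *
        E * ∑ i ∈ s, exp (-((p - 2) * |x - z i|)) := by
  set c := 2 * (p + 1) * (2 * (p + 1)) ^ (1 / (p - 1))
  have hQ : ∀ k ∈ s, |σ k * Q p (x - z k)| ≤ Q p (x - z k) := fun k hk => by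
    rw [abs_mul, abs_of_nonneg (Q_nonneg hp _)]
    exact mul_le_of_le_one_left (Q_nonneg hp _) (hσ k hk)
  refine (abs_f_sum_sub_sum_f_le hp s _).trans ?_
  calc (p * (#s : ℝ) ^ (p - 1) + 1) * ∑ i ∈ s, ∑ j ∈ s.erase i,
        |σ i * Q p (x - z i)| ^ (p - 1) * |σ j * Q p (x - z j)|
      ≤ (p * (#s : ℝ) ^ (p - 1) + 1) * ∑ i ∈ s, ∑ j ∈ s.erase i,
          c * E * exp (-((p - 2) * |x - z i|)) := by
        gcongr _ * ∑ i ∈ s, ∑ j ∈ s.erase i, ?_ with i hi j hj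
        calc |σ i * Q p (x - z i)| ^ (p - 1) * |σ j * Q p (x - z j)|
            ≤ Q p (x - z i) ^ (p - 1) * Q p (x - z j) := by
              gcongr
              · exact rpow_nonneg (Q_nonneg hp _) _
              · exact hQ i hi
              · exact hQ j (mem_of_mem_erase hj)
          _ ≤ c * exp (-|z i - z j|) * exp (-((p - 2) * |x - z i|)) :=
              Q_rpow_mul_Q_le hp _ _ _
          _ ≤ c * E * exp (-((p - 2) * |x - z i|)) := by
              gcongr
              exact hE i hi j (mem_of_mem_erase hj) (ne_of_mem_erase hj).symm
    _ ≤ (p * (#s : ℝ) ^ (p - 1) + 1) *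
          ∑ i ∈ s, (#s : ℝ) * (c * E * exp (-((p - 2) * |x - z i|))) := by
        gcongr _ * ∑ i ∈ s, ?_ with i hi
        rw [sum_const, nsmul_eq_mul]
        exact mul_le_mul_of_nonneg_right (by exact_mod_cast card_erase_le) (by positivity)
    _ = _ := by simp only [← mul_sum]; ring

lemma integral_exp_neg_mul_abs {b : ℝ} (hb : 0 < b) : ∫ x, exp (-(b * |x|)) = 2 / b := by
  have h := integral_exp_mul_Ioi (neg_neg_of_pos hb) 0
  simp only [neg_mul, mul_zero, exp_zero] at h
  rw [integral_comp_abs (f := fun x => exp (-(b * x))), h]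
  field_simp

lemma integrable_exp_neg_mul_abs {b : ℝ} (hb : 0 < b) : Integrable fun x => exp (-(b * |x|)) :=
  .of_integral_ne_zero (by rw [integral_exp_neg_mul_abs hb]; positivity)

lemma sqrt_integral_sq_le_of_abs_le_sum_exp {ι : Type*} {g : ℝ → ℝ} {s : Finset ι}
    {z : ι → ℝ} {b c : ℝ} (hb : 0 < b) (hc : 0 ≤ c)
    (hg : ∀ x, |g x| ≤ c * ∑ i ∈ s, exp (-(b * |x - z i|))) :
    √(∫ x, g x ^ 2) ≤ c * #s / √b := by
  set h : ℝ → ℝ := fun x => c ^ 2 * #s * ∑ i ∈ s, exp (-(2 * b * |x - z i|))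
  have hpt : ∀ x, g x ^ 2 ≤ h x := fun x =>
    calc g x ^ 2 = |g x| ^ 2 := (sq_abs _).symm
      _ ≤ (c * ∑ i ∈ s, exp (-(b * |x - z i|))) ^ 2 :=
          pow_le_pow_left₀ (abs_nonneg _) (hg x) 2
      _ ≤ c ^ 2 * (#s * ∑ i ∈ s, exp (-(b * |x - z i|)) ^ 2) := by
        rw [mul_pow]; gcongr; exact sq_sum_le_card_mul_sum_sq
      _ = h x := by
        simp only [h, ← exp_nat_mul]; push_cast; ring_nf
  have hshift : ∀ i, ∫ x, exp (-(2 * b * |x - z i|)) = 1 / b := fun i =>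
    (integral_sub_right_eq_self (fun x => exp (-(2 * b * |x|))) (z i)).trans
      (by rw [integral_exp_neg_mul_abs (by positivity)]; field_simp)
  have hint : ∀ i, Integrable fun x => exp (-(2 * b * |x - z i|)) := fun i =>
    (integrable_exp_neg_mul_abs (by positivity)).comp_sub_right (z i)
  have hI : ∫ x, h x = (c * #s) ^ 2 / b := by
    simp only [h]
    rw [integral_const_mul, integral_finsetSum _ fun i _ => hint i]
    simp only [hshift, sum_const, nsmul_eq_mul]
    ring
  calc √(∫ x, g x ^ 2) ≤ √(∫ x, h x) :=
        sqrt_le_sqrt (integral_mono_of_nonneg (.of_forall fun x => sq_nonneg _)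
          ((integrable_finsetSum _ fun i _ => hint i).const_mul _) (.of_forall hpt))
    _ = c * #s / √b := by rw [hI, sqrt_div (sq_nonneg _), sqrt_sq (by positivity)]

lemma exp_neg_abs_sub_le_sum_exp_neg_gaps {z : ℕ → ℝ} {K : ℕ}
    (hz : ∀ k, k + 1 < K → z k < z (k + 1)) {i j : ℕ} (hi : i < K) (hj : j < K)
    (hij : i ≠ j) :
    exp (-|z i - z j|) ≤ ∑ k ∈ range (K - 1), exp (-(z (k + 1) - z k)) := by
  wlog h : i < j generalizing i j
  · rw [abs_sub_comm]
    exact this hj hi hij.symm (lt_of_le_of_ne (not_lt.1 h) hij.symm)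
  have hmono : StrictMonoOn z (Set.Iio K) :=
    strictMonoOn_of_lt_succ Set.ordConnected_Iio fun k _ _ hk => hz k hk
  have hle : z (i + 1) ≤ z j := hmono.monotoneOn (Set.mem_Iio.2 (by omega)) hj h
  calc exp (-|z i - z j|) ≤ exp (-(z (i + 1) - z i)) := by
        rw [abs_sub_comm, abs_of_nonneg (by linarith [hz i (by omega)])]
        gcongr
    _ ≤ ∑ k ∈ range (K - 1), exp (-(z (k + 1) - z k)) :=
        single_le_sum (f := fun k => exp (-(z (k + 1) - z k))) (fun _ _ => (exp_pos _).le)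
          (mem_range.2 (by omega))

end

theorem interaction_term_L2_bound (p : ℝ) (hp : 2 < p) (K : ℕ) (hK : 2 ≤ K) :
    ∃ C > 0, ∃ r₀ > 0, ∀ σ z : ℕ → ℝ,
      (∀ k, k < K → σ k = 1 ∨ σ k = -1) →
      (∀ k, k + 1 < K → z k < z (k + 1)) →
      (∀ k, k + 1 < K → r₀ ≤ z (k + 1) - z k) →
      Real.sqrt (∫ x : ℝ,
          (f p (∑ k ∈ Finset.range K, σ k * Q p (x - z k)) -
            ∑ k ∈ Finset.range K, f p (σ k * Q p (x - z k))) ^ 2)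
        ≤ C * ∑ k ∈ Finset.range (K - 1), Real.exp (-(z (k + 1) - z k)) := by
  have hp1 : 1 < p := by linarith
  have hK0 : (0 : ℝ) < K := by exact_mod_cast (by omega : 0 < K)
  refine ⟨(p * (K : ℝ) ^ (p - 1) + 1) * (2 * (p + 1) * (2 * (p + 1)) ^ (1 / (p - 1))) * K * K /
    √(p - 2), div_pos (by positivity) (sqrt_pos.2 (by linarith)), 1, one_pos,
    fun σ z hσ hz _ => ?_⟩
  have hσ' : ∀ k ∈ range K, |σ k| ≤ 1 := fun k hk => by
    rcases hσ k (mem_range.1 hk) with h | h <;> simp [h]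
  have hG := abs_f_sum_Q_sub_sum_f_le hp1 (range K) hσ'
    (sum_nonneg fun k _ => (exp_pos (-(z (k + 1) - z k))).le)
    fun i hi j hj hij =>
      exp_neg_abs_sub_le_sum_exp_neg_gaps hz (mem_range.1 hi) (mem_range.1 hj) hij
  rw [card_range] at hG
  refine (sqrt_integral_sq_le_of_abs_le_sum_exp (by linarith) ?_ hG).trans_eq ?_
  · have := sum_nonneg fun k (_ : k ∈ range (K - 1)) => (exp_pos (-(z (k + 1) - z k))).le
    positivity
  · rw [card_range]; ring
end

section
/- Let p > 2. If v : ℝ → ℝ is a twice continuously differentiable square-integrable function satisfying −v''(x) + v(x) − p·Q(x)^(p−1)·v(x) = 0 for all x ∈ ℝ, then v is a scalar multiple of Q'. -/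
open MeasureTheory

open Filter Set Real

/-!
Both `v` and `Q'` solve `y'' = (1 - p Q^(p-1)) y` (differentiate `Q'' = Q - Q^p`), so their
Wronskian `W = v Q'' - v' Q'` is constant. Since `(v Q')' = 2 v Q'' - W` with `Q'`, `Q''` bounded
and `v ∈ L²`, a nonzero `W` would make `|v Q'|`, hence `|v|`, grow linearly on `[0, ∞)`, which
contradicts `v ∈ L²`. So `W = 0`; as `Q'(0) = 0 ≠ Q''(0)`, the function `v - (v'(0) / Q''(0)) Q'`
has zero Cauchy data at `0` and vanishes by uniqueness for linear ODEs.
-/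

theorem MeasureTheory.Integrable.frequently_atTop_norm_lt {E : Type*} [NormedAddCommGroup E]
    {f : ℝ → E} (hf : Integrable f) {ε : ℝ} (hε : 0 < ε) : ∃ᶠ x in atTop, ‖f x‖ < ε := by
  rw [frequently_atTop]
  intro a
  by_contra! h
  have hsub : Ici a ⊆ {x | ε ≤ ‖f x‖} := fun x hx => h x hx
  have := (measure_mono hsub).trans_lt (hf.measure_norm_ge_lt_top hε)
  simp at this

theorem abs_intervalIntegral_le_of_abs_le_mul_sq_add {g v : ℝ → ℝ} {c d R : ℝ}
    (hg : Continuous g) (hv : Integrable fun x => v x ^ 2) (hc : 0 ≤ c) (hR : 0 ≤ R)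
    (hgv : ∀ x, |g x| ≤ c * v x ^ 2 + d) :
    |∫ x in 0..R, g x| ≤ c * (∫ x, v x ^ 2) + d * R := by
  have hv0R : IntervalIntegrable (fun x => v x ^ 2) volume 0 R := hv.intervalIntegrable
  calc |∫ x in 0..R, g x| ≤ ∫ x in 0..R, |g x| := intervalIntegral.abs_integral_le_integral_abs hR
    _ ≤ ∫ x in 0..R, (c * v x ^ 2 + d) :=
      intervalIntegral.integral_mono_on hR (hg.abs.intervalIntegrable _ _)
        ((hv0R.const_mul c).add intervalIntegrable_const) fun x _ => hgv x
    _ = c * (∫ x in 0..R, v x ^ 2) + d * R := by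
      rw [intervalIntegral.integral_add (hv0R.const_mul c) intervalIntegrable_const,
        intervalIntegral.integral_const_mul, intervalIntegral.integral_const, smul_eq_mul]
      ring
    _ ≤ c * (∫ x, v x ^ 2) + d * R := by
      gcongr
      rw [intervalIntegral.integral_of_le hR]
      exact setIntegral_le_integral hv (Eventually.of_forall fun x => sq_nonneg _)

theorem eq_zero_of_hasDerivAt_mul_self {q w w' : ℝ → ℝ} {K : ℝ} (hq : ∀ t, |q t| ≤ K)
    (hw : ∀ t, HasDerivAt w (w' t) t) (hw' : ∀ t, HasDerivAt w' (q t * w t) t) {t₀ : ℝ}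
    (h₀ : w t₀ = 0) (h₀' : w' t₀ = 0) : w = 0 := by
  have hlip : ∀ t, LipschitzWith (max 1 K.toNNReal) fun y : ℝ × ℝ => (y.2, q t * y.1) :=
    fun t => LipschitzWith.prod_snd.prodMk
      (((lipschitzWith_smul (q t)).comp LipschitzWith.prod_fst).weaken (by
        rw [mul_one, ← NNReal.coe_le_coe, coe_nnnorm, Real.coe_toNNReal']
        exact (hq t).trans (le_max_left _ _)))
  have hsol := ODE_solution_unique_univ (fun t => (hlip t).lipschitzOnWith (s := univ))
    (f := fun t => (w t, w' t)) (g := fun _ => 0) (t₀ := t₀)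
    (fun t => ⟨(hw t).prodMk (hw' t), trivial⟩)
    (fun t => ⟨(hasDerivAt_const t _).congr_deriv (by simp [Prod.zero_eq_mk]), trivial⟩)
    (by simp [h₀, h₀'])
  funext t
  exact congrArg Prod.fst (congrFun hsol t)

theorem Real.hasDerivAt_tanh (x : ℝ) : HasDerivAt tanh (1 / cosh x ^ 2) x := by
  have h := (hasDerivAt_sinh x).div (hasDerivAt_cosh x) (cosh_pos x).ne'
  rw [show sinh / cosh = tanh from funext fun y => (tanh_eq_sinh_div_cosh y).symm] at h
  refine h.congr_deriv ?_
  rw [← cosh_sq_sub_sinh_sq x]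
  ring

section Wronskian

variable {q u u' v v' : ℝ → ℝ}

theorem wronskian_eq_of_hasDerivAt (hu : ∀ x, HasDerivAt u (u' x) x)
    (hu' : ∀ x, HasDerivAt u' (q x * u x) x) (hv : ∀ x, HasDerivAt v (v' x) x)
    (hv' : ∀ x, HasDerivAt v' (q x * v x) x) (x y : ℝ) :
    v x * u' x - v' x * u x = v y * u' y - v' y * u y := by
  have hW : ∀ x, HasDerivAt (fun x => v x * u' x - v' x * u x) 0 x := fun x =>
    (((hv x).mul (hu' x)).sub ((hv' x).mul (hu x))).congr_deriv (by ring)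
  exact is_const_of_deriv_eq_zero (fun x => (hW x).differentiableAt) (fun x => (hW x).deriv) x y

theorem half_abs_wronskian_mul_le {B w R : ℝ} (hu : ∀ x, HasDerivAt u (u' x) x)
    (hv : ∀ x, HasDerivAt v (v' x) x) (hu'_cont : Continuous u') (hB : ∀ x, |u' x| ≤ B)
    (hW : ∀ x, v x * u' x - v' x * u x = w) (hL2 : Integrable fun x => v x ^ 2) (hw : w ≠ 0)
    (hR : 0 ≤ R) :
    |w| * R / 2 ≤ |v R * u R| + |v 0 * u 0| + 2 * B ^ 2 / |w| * ∫ x, v x ^ 2 := by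
  have hw0 : 0 < |w| := abs_pos.mpr hw
  have hB0 : 0 ≤ B := (abs_nonneg _).trans (hB 0)
  have hv_cont : Continuous v := continuous_iff_continuousAt.mpr fun x => (hv x).continuousAt
  have hderiv : ∀ x, HasDerivAt (fun x => v x * u x + w * x) (2 * (v x * u' x)) x := fun x =>
    (((hv x).mul (hu x)).add ((hasDerivAt_id x).const_mul w)).congr_deriv (by linarith [hW x])
  have hFTC : v R * u R - v 0 * u 0 + w * R = ∫ x in 0..R, 2 * (v x * u' x) := by
    rw [intervalIntegral.integral_eq_sub_of_hasDerivAt (fun x _ => hderiv x)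
      ((continuous_const.mul (hv_cont.mul hu'_cont)).intervalIntegrable _ _)]
    ring
  have hint : |∫ x in 0..R, 2 * (v x * u' x)| ≤ 2 * B ^ 2 / |w| * (∫ x, v x ^ 2) + |w| / 2 * R :=
    abs_intervalIntegral_le_of_abs_le_mul_sq_add (continuous_const.mul (hv_cont.mul hu'_cont))
      hL2 (by positivity) hR fun x => by
        have hx : |2 * (v x * u' x)| ≤ 2 * B * |v x| := by
          rw [abs_mul, abs_mul, abs_two]
          nlinarith [hB x, abs_nonneg (v x)]
        have hamgm : 2 * B ^ 2 / |w| * v x ^ 2 + |w| / 2 - 2 * B * |v x|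
            = 2 / |w| * (B * |v x| - |w| / 2) ^ 2 := by
          field_simp; rw [← sq_abs (v x)]; ring
        nlinarith [show 0 ≤ 2 / |w| * (B * |v x| - |w| / 2) ^ 2 by positivity]
  rw [← hFTC] at hint
  have h1 := abs_sub (v R * u R - v 0 * u 0 + w * R) (v R * u R - v 0 * u 0)
  rw [add_sub_cancel_left, abs_mul, abs_of_nonneg hR] at h1
  linarith [abs_sub (v R * u R) (v 0 * u 0)]

theorem wronskian_eq_zero_of_sq_integrable {A B w : ℝ} (hu : ∀ x, HasDerivAt u (u' x) x)
    (hv : ∀ x, HasDerivAt v (v' x) x) (hu'_cont : Continuous u') (hA : ∀ x, |u x| ≤ A)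
    (hB : ∀ x, |u' x| ≤ B) (hW : ∀ x, v x * u' x - v' x * u x = w)
    (hL2 : Integrable fun x => v x ^ 2) : w = 0 := by
  by_contra hw
  have hw0 : 0 < |w| := abs_pos.mpr hw
  have hA0 : 0 ≤ A := (abs_nonneg _).trans (hA 0)
  set C := |v 0 * u 0| + 2 * B ^ 2 / |w| * ∫ x, v x ^ 2
  have hlarge : ∀ᶠ R in atTop, 1 ≤ ‖v R ^ 2‖ := by
    filter_upwards [eventually_ge_atTop 0, eventually_ge_atTop (2 * (C + A + 1) / |w|)]
      with R hR hRC
    have hgrowth := half_abs_wronskian_mul_le hu hv hu'_cont hB hW hL2 hw hR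
    have hvu : |v R * u R| ≤ |v R| * A := by
      rw [abs_mul]; exact mul_le_mul_of_nonneg_left (hA R) (abs_nonneg _)
    rw [div_le_iff₀ hw0] at hRC
    rw [norm_pow, Real.norm_eq_abs]
    nlinarith [abs_nonneg (v R)]
  obtain ⟨R, hR, hR'⟩ := ((hL2.frequently_atTop_norm_lt one_pos).and_eventually hlarge).exists
  exact absurd hR' (not_le.mpr hR)

theorem eq_const_mul_of_wronskian_eq_zero {K t₀ : ℝ} (hq : ∀ t, |q t| ≤ K)
    (hu : ∀ x, HasDerivAt u (u' x) x) (hu' : ∀ x, HasDerivAt u' (q x * u x) x)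
    (hv : ∀ x, HasDerivAt v (v' x) x) (hv' : ∀ x, HasDerivAt v' (q x * v x) x)
    (hW : v t₀ * u' t₀ - v' t₀ * u t₀ = 0) (hu't₀ : u' t₀ ≠ 0) (x : ℝ) :
    v x = v' t₀ / u' t₀ * u x := by
  set c := v' t₀ / u' t₀
  have hzero := eq_zero_of_hasDerivAt_mul_self hq (w := fun x => v x - c * u x) (t₀ := t₀)
    (fun x => (hv x).sub ((hu x).const_mul c))
    (fun x => ((hv' x).sub ((hu' x).const_mul c)).congr_deriv (by ring)) ?_ ?_
  · exact sub_eq_zero.mp (congrFun hzero x)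
  · simp only [c]
    field_simp
    linarith
  · simp only [c]
    field_simp
    ring

end Wronskian

section GroundState

variable {p : ℝ}

theorem Q_pos (hp : 1 < p) (x : ℝ) : 0 < Q p x := by
  have := cosh_pos ((p - 1) / 2 * x)
  exact rpow_pos_of_pos (div_pos (by linarith) (by positivity)) _

theorem Q_rpow_sub_one (hp : 1 < p) (x : ℝ) :
    Q p x ^ (p - 1) = (p + 1) / (2 * cosh ((p - 1) / 2 * x) ^ 2) := by
  have := cosh_pos ((p - 1) / 2 * x)
  rw [Q, ← rpow_mul (div_pos (by linarith) (by positivity)).le,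
    one_div_mul_cancel (by linarith), rpow_one]

theorem Q_rpow (hp : 1 < p) (x : ℝ) : Q p x ^ p = Q p x ^ (p - 1) * Q p x := by
  rw [← rpow_add_one (Q_pos hp x).ne']
  ring_nf

theorem hasDerivAt_Q (hp : 1 < p) (x : ℝ) :
    HasDerivAt (Q p) (-Q p x * tanh ((p - 1) / 2 * x)) x := by
  have hc := cosh_pos ((p - 1) / 2 * x)
  have hcosh : HasDerivAt (fun y => cosh ((p - 1) / 2 * y))
      (sinh ((p - 1) / 2 * x) * ((p - 1) / 2)) x :=
    (hasDerivAt_cosh _).comp x ((hasDerivAt_id x).const_mul _ |>.congr_deriv (mul_one _))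
  have hg := ((hasDerivAt_const x (p + 1)).div ((hcosh.pow 2).const_mul 2)
    (by simp; positivity)).rpow_const (p := 1 / (p - 1))
    (Or.inl (div_pos (by linarith) (by simp; positivity)).ne')
  refine hg.congr_deriv ?_
  simp only [Pi.div_apply, Pi.pow_apply]
  have : p - 1 ≠ 0 := by linarith
  rw [Q, tanh_eq_sinh_div_cosh, rpow_sub_one (div_pos (by linarith) (by positivity)).ne']
  field_simp
  ring

theorem deriv_Q (hp : 1 < p) : deriv (Q p) = fun x => -Q p x * tanh ((p - 1) / 2 * x) :=
  funext fun x => (hasDerivAt_Q hp x).deriv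

theorem hasDerivAt_deriv_Q (hp : 1 < p) (x : ℝ) :
    HasDerivAt (deriv (Q p)) (Q p x - Q p x ^ p) x := by
  have ht : HasDerivAt (fun y => tanh ((p - 1) / 2 * y))
      (1 / cosh ((p - 1) / 2 * x) ^ 2 * ((p - 1) / 2)) x :=
    (hasDerivAt_tanh _).comp x ((hasDerivAt_id x).const_mul _ |>.congr_deriv (mul_one _))
  rw [deriv_Q hp]
  refine ((hasDerivAt_Q hp x).neg.mul ht).congr_deriv ?_
  rw [Q_rpow hp, Q_rpow_sub_one hp, tanh_eq_sinh_div_cosh, Pi.neg_apply]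
  have hc := cosh_pos ((p - 1) / 2 * x)
  have hsq := cosh_sq ((p - 1) / 2 * x)
  generalize (p - 1) / 2 * x = y at hc hsq ⊢
  field_simp
  linear_combination (-(2 * Q p x)) * hsq

theorem Q_rpow_sub_one_le (hp : 1 < p) (x : ℝ) : Q p x ^ (p - 1) ≤ (p + 1) / 2 := by
  rw [Q_rpow_sub_one hp]
  have := one_le_cosh ((p - 1) / 2 * x)
  exact div_le_div_of_nonneg_left (by linarith) two_pos (by nlinarith)

theorem Q_le_Q_zero (hp : 1 < p) (x : ℝ) : Q p x ≤ Q p 0 := by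
  have := one_le_cosh ((p - 1) / 2 * x)
  unfold Q
  rw [mul_zero, cosh_zero]
  gcongr

theorem abs_deriv_Q_le (hp : 1 < p) (x : ℝ) : |deriv (Q p) x| ≤ Q p 0 := by
  rw [deriv_Q hp, abs_mul, abs_neg, abs_of_pos (Q_pos hp x)]
  calc Q p x * |tanh ((p - 1) / 2 * x)| ≤ Q p x * 1 :=
        mul_le_mul_of_nonneg_left (abs_tanh_lt_one _).le (Q_pos hp x).le
    _ ≤ Q p 0 := by rw [mul_one]; exact Q_le_Q_zero hp x

theorem abs_Q_sub_rpow_le (hp : 1 < p) (x : ℝ) : |Q p x - Q p x ^ p| ≤ (p + 3) / 2 * Q p 0 := by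
  have hQ := Q_pos hp x
  have hQ0 := Q_le_Q_zero hp x
  have hg := Q_rpow_sub_one_le hp x
  have hg0 : 0 ≤ Q p x ^ (p - 1) := rpow_nonneg hQ.le _
  rw [Q_rpow hp, abs_le]
  constructor <;> nlinarith

theorem Q_sub_rpow_zero_ne (hp : 1 < p) : Q p 0 - Q p 0 ^ p ≠ 0 := by
  rw [Q_rpow hp, Q_rpow_sub_one hp, mul_zero, cosh_zero]
  have := Q_pos hp 0
  intro h
  nlinarith

theorem abs_one_sub_mul_Q_rpow_le (hp : 1 < p) (x : ℝ) :
    |1 - p * Q p x ^ (p - 1)| ≤ 1 + p * (p + 1) / 2 := by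
  have hg := Q_rpow_sub_one_le hp x
  have hg0 : 0 ≤ Q p x ^ (p - 1) := rpow_nonneg (Q_pos hp x).le _
  rw [abs_le]
  constructor <;> nlinarith

theorem hasDerivAt_Q_sub_rpow (hp : 1 < p) (x : ℝ) :
    HasDerivAt (fun x => Q p x - Q p x ^ p) ((1 - p * Q p x ^ (p - 1)) * deriv (Q p) x) x := by
  have hQ := (hasDerivAt_Q hp x).differentiableAt.hasDerivAt
  exact (hQ.sub (hQ.rpow_const (Or.inl (Q_pos hp x).ne'))).congr_deriv (by ring)

theorem continuous_Q_sub_rpow (hp : 1 < p) : Continuous fun x => Q p x - Q p x ^ p :=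
  continuous_iff_continuousAt.mpr fun x => (hasDerivAt_Q_sub_rpow hp x).continuousAt

end GroundState

theorem linearized_operator_kernel (p : ℝ) (hp : 2 < p) (v : ℝ → ℝ)
    (hv : ContDiff ℝ 2 v)
    (hL2 : Integrable (fun x => v x ^ 2))
    (heq : ∀ x : ℝ, -(deriv (deriv v) x) + v x - p * Q p x ^ (p - 1) * v x = 0) :
    ∃ c : ℝ, ∀ x : ℝ, v x = c * deriv (Q p) x := by
  have hp1 : 1 < p := by linarith
  have hv₁ : ∀ x, HasDerivAt v (deriv v x) x := fun x =>
    (hv.differentiable two_ne_zero x).hasDerivAt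
  have hv₂ : ∀ x, HasDerivAt (deriv v) ((1 - p * Q p x ^ (p - 1)) * v x) x := fun x =>
    (hv.differentiable_deriv_two x).hasDerivAt.congr_deriv (by linarith [heq x])
  have hu₁ := hasDerivAt_deriv_Q hp1
  have hu₂ := hasDerivAt_Q_sub_rpow hp1
  have hW := wronskian_eq_zero_of_sq_integrable hu₁ hv₁ (continuous_Q_sub_rpow hp1)
    (abs_deriv_Q_le hp1) (abs_Q_sub_rpow_le hp1)
    (fun x => wronskian_eq_of_hasDerivAt hu₁ hu₂ hv₁ hv₂ x 0) hL2
  exact ⟨_, eq_const_mul_of_wronskian_eq_zero (abs_one_sub_mul_Q_rpow_le hp1) hu₁ hu₂ hv₁ hv₂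
    hW (Q_sub_rpow_zero_ne hp1)⟩
end
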